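/- Let u : ℝ⁴ → Sⁿ ⊂ ℝ^{n+1} be a smooth extrinsic biharmonic map into the unit sphere, i.e. a critical point of ∫|Δu|². Define V^{ij} = u^i ∇u^j − u^j ∇u^i, w^{ij} = div V^{ij} − 2|∇u|² δ^{ij}, and W^{ij} = ∇(div V^{ij}) + 2[Δu^i ∇u^j − Δu^j ∇u^i]. Then div W = 0, i.e. ∑_k ∂_{x_k} W^{ij}_k = 0 for all i, j. -/

import Mathlib

open MeasureTheory Metric Set ENNReal NNReal

noncomputable section

/-- Four dimensional Euclidean space. -/
abbrev E4 : Type := EuclideanSpace ℝ (Fin 4)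

/-- The `k`-th partial derivative of a function on `ℝ⁴`. -/
def pd {E : Type*} [NormedAddCommGroup E] [NormedSpace ℝ E] (k : Fin 4) (f : E4 → E) : E4 → E :=
  fun x => fderiv ℝ f x (EuclideanSpace.single k 1)

/-- The Laplacian on `ℝ⁴`. -/
def lap {E : Type*} [NormedAddCommGroup E] [NormedSpace ℝ E] (f : E4 → E) : E4 → E :=
  fun x => ∑ k : Fin 4, pd k (pd k f) x

/-- The Bilaplacian on `ℝ⁴`. -/
def bilap {E : Type*} [NormedAddCommGroup E] [NormedSpace ℝ E] (f : E4 → E) : E4 → E :=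
  lap (lap f)

/-- The potential `V^{ij} = uⁱ∇uʲ − uʲ∇uⁱ` (component in direction `k`). -/
def sphV {n : ℕ} (u : E4 → Fin (n + 1) → ℝ) (y : E4) (k : Fin 4) (i j : Fin (n + 1)) : ℝ :=
  u y i * pd k u y j - u y j * pd k u y i

/-- `div V^{ij}`. -/
def sphDivV {n : ℕ} (u : E4 → Fin (n + 1) → ℝ) (y : E4) (i j : Fin (n + 1)) : ℝ :=
  ∑ k : Fin 4, pd k (fun z => sphV u z k i j) y

/-- `|∇u|²`. -/
def gradSq {n : ℕ} (u : E4 → Fin (n + 1) → ℝ) (y : E4) : ℝ :=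
  ∑ k : Fin 4, ∑ a, (pd k u y a) ^ 2

/-- The potential `w^{ij} = div V^{ij} − 2|∇u|² δ^{ij}`. -/
def sphw {n : ℕ} (u : E4 → Fin (n + 1) → ℝ) (y : E4) (i j : Fin (n + 1)) : ℝ :=
  sphDivV u y i j - 2 * gradSq u y * (if i = j then 1 else 0)

/-- The potential `W^{ij} = ∇(div V^{ij}) + 2[Δuⁱ∇uʲ − Δuʲ∇uⁱ]` (component `k`). -/
def sphW {n : ℕ} (u : E4 → Fin (n + 1) → ℝ) (y : E4) (k : Fin 4) (i j : Fin (n + 1)) : ℝ :=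
  pd k (fun z => sphDivV u z i j) y + 2 * (lap u y i * pd k u y j - lap u y j * pd k u y i)

/-- `u` is an extrinsic biharmonic map into the sphere iff `Δ²u` is pointwise parallel
to `u` (equivalently, orthogonal to the tangent space of the sphere at `u`). -/
def IsExtBiharmonicSphere {n : ℕ} (u : E4 → Fin (n + 1) → ℝ) : Prop :=
  ∃ lam : E4 → ℝ, ∀ x : E4, bilap u x = lam x • u x

/-! ### Auxiliary calculus lemmas -/

lemma pd_smooth {E : Type*} [NormedAddCommGroup E] [NormedSpace ℝ E] {f : E4 → E}
    (hf : ContDiff ℝ (⊤ : ℕ∞) f) (k : Fin 4) : ContDiff ℝ (⊤ : ℕ∞) (pd k f) :=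
  (hf.fderiv_right (by simp)).clm_apply contDiff_const

lemma lap_smooth {E : Type*} [NormedAddCommGroup E] [NormedSpace ℝ E] {f : E4 → E}
    (hf : ContDiff ℝ (⊤ : ℕ∞) f) : ContDiff ℝ (⊤ : ℕ∞) (lap f) :=
  ContDiff.sum fun k _ => pd_smooth (pd_smooth hf k) k

lemma pd_pi {m : ℕ} {u : E4 → Fin m → ℝ} (hu : ContDiff ℝ (⊤ : ℕ∞) u) (k : Fin 4) (i : Fin m)
    (x : E4) : pd k u x i = pd k (fun y => u y i) x := by
  have hd : HasFDerivAt u (fderiv ℝ u x) x := (hu.differentiable (by simp) x).hasFDerivAt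
  have h2 : HasFDerivAt (fun y => u y i)
      (((ContinuousLinearMap.proj i : (Fin m → ℝ) →L[ℝ] ℝ)).comp (fderiv ℝ u x)) x :=
    ((ContinuousLinearMap.proj i : (Fin m → ℝ) →L[ℝ] ℝ).hasFDerivAt).comp x hd
  simp [pd, h2.fderiv]

lemma pd_mul {f g : E4 → ℝ} {x : E4} (hf : DifferentiableAt ℝ f x) (hg : DifferentiableAt ℝ g x)
    (k : Fin 4) : pd k (fun y => f y * g y) x = pd k f x * g x + f x * pd k g x := by
  simp [pd, fderiv_fun_mul hf hg]; ring

lemma pd_sub {f g : E4 → ℝ} {x : E4} (hf : DifferentiableAt ℝ f x) (hg : DifferentiableAt ℝ g x)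
    (k : Fin 4) : pd k (fun y => f y - g y) x = pd k f x - pd k g x := by
  simp [pd, fderiv_fun_sub hf hg]

lemma pd_add {f g : E4 → ℝ} {x : E4} (hf : DifferentiableAt ℝ f x) (hg : DifferentiableAt ℝ g x)
    (k : Fin 4) : pd k (fun y => f y + g y) x = pd k f x + pd k g x := by
  simp [pd, fderiv_fun_add hf hg]

lemma pd_const_mul {f : E4 → ℝ} {x : E4} (hf : DifferentiableAt ℝ f x) (c : ℝ)
    (k : Fin 4) : pd k (fun y => c * f y) x = c * pd k f x := by
  simp [pd, fderiv_const_mul hf c]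

/-- Differentiability from smoothness, everywhere. -/
lemma dAt {g : E4 → ℝ} (h : ContDiff ℝ (⊤ : ℕ∞) g) (y : E4) : DifferentiableAt ℝ g y :=
  (h.differentiable (by simp)).differentiableAt

/-- Second derivative of a product. -/
lemma pd2_mul {a b : E4 → ℝ} (ha : ContDiff ℝ (⊤ : ℕ∞) a) (hb : ContDiff ℝ (⊤ : ℕ∞) b) (k : Fin 4)
    (x : E4) : pd k (pd k (fun y => a y * b y)) x
      = pd k (pd k a) x * b x + 2 * (pd k a x * pd k b x) + a x * pd k (pd k b) x := by
  have h : pd k (fun y => a y * b y) = fun y => pd k a y * b y + a y * pd k b y :=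
    funext fun y => pd_mul (dAt ha y) (dAt hb y) k
  rw [h, pd_add ((dAt (pd_smooth ha k) x).fun_mul (dAt hb x))
        ((dAt ha x).fun_mul (dAt (pd_smooth hb k) x)) k,
      pd_mul (dAt (pd_smooth ha k) x) (dAt hb x) k,
      pd_mul (dAt ha x) (dAt (pd_smooth hb k) x) k]
  ring

/-- Laplacian of components. -/
lemma lap_pi {m : ℕ} {u : E4 → Fin m → ℝ} (hu : ContDiff ℝ (⊤ : ℕ∞) u) (a : Fin m) (x : E4) :
    lap u x a = lap (fun y => u y a) x := by
  unfold lap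
  rw [Finset.sum_apply]
  refine Finset.sum_congr rfl fun k _ => ?_
  rw [pd_pi (pd_smooth hu k) k a x]
  congr 1
  funext z
  exact pd_pi hu k a z

lemma bilap_pi {m : ℕ} {u : E4 → Fin m → ℝ} (hu : ContDiff ℝ (⊤ : ℕ∞) u) (a : Fin m) (x : E4) :
    bilap u x a = lap (lap (fun y => u y a)) x := by
  unfold bilap
  rw [lap_pi (lap_smooth hu) a x]
  congr 1
  funext z
  exact lap_pi hu a z

/-- If `u : ℝ⁴ → Sⁿ` is a smooth extrinsic biharmonic map into the unit
sphere, then with `V^{ij} = uⁱ∇uʲ − uʲ∇uⁱ`, `w^{ij} = div V^{ij} − 2|∇u|²δ^{ij}` and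
`W^{ij} = ∇(div V^{ij}) + 2[Δuⁱ∇uʲ − Δuʲ∇uⁱ]` one has `div W = 0`. -/
theorem stmt3 {n : ℕ} (u : E4 → Fin (n + 1) → ℝ) (hu : ContDiff ℝ (⊤ : ℕ∞) u)
    (hsph : ∀ x : E4, ∑ i, (u x i) ^ 2 = 1)
    (hbih : IsExtBiharmonicSphere u) :
    ∀ (x : E4) (i j : Fin (n + 1)),
      ∑ k : Fin 4, pd k (fun y => sphW u y k i j) x = 0 := by
  intro x i j
  obtain ⟨lam, hlam⟩ := hbih
  set f : Fin (n + 1) → E4 → ℝ := fun a y => u y a with hfdef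
  have hF : ∀ a, ContDiff ℝ (⊤ : ℕ∞) (f a) := fun a => contDiff_pi.mp hu a
  have hL : ∀ a, ContDiff ℝ (⊤ : ℕ∞) (lap (f a)) := fun a => lap_smooth (hF a)
  -- Step 1: div V = uⁱ Δuʲ − uʲ Δuⁱ
  have hDivV : ∀ y, sphDivV u y i j = f i y * lap (f j) y - f j y * lap (f i) y := by
    intro y
    unfold sphDivV
    have h1 : ∀ k : Fin 4, (fun z => sphV u z k i j)
        = fun z => f i z * pd k (f j) z - f j z * pd k (f i) z := by
      intro k; funext z; unfold sphV
      rw [pd_pi hu k j z, pd_pi hu k i z]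
    calc ∑ k : Fin 4, pd k (fun z => sphV u z k i j) y
        = ∑ k : Fin 4, (f i y * pd k (pd k (f j)) y - f j y * pd k (pd k (f i)) y) := by
          refine Finset.sum_congr rfl fun k _ => ?_
          rw [h1 k,
            pd_sub ((dAt (hF i) y).fun_mul (dAt (pd_smooth (hF j) k) y))
              ((dAt (hF j) y).fun_mul (dAt (pd_smooth (hF i) k) y)) k,
            pd_mul (dAt (hF i) y) (dAt (pd_smooth (hF j) k) y) k,
            pd_mul (dAt (hF j) y) (dAt (pd_smooth (hF i) k) y) k]
          ring
      _ = f i y * lap (f j) y - f j y * lap (f i) y := by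
          rw [Finset.sum_sub_distrib, ← Finset.mul_sum, ← Finset.mul_sum]
          rfl
  -- The function whose gradient appears in W
  set G : E4 → ℝ := fun z => f i z * lap (f j) z - f j z * lap (f i) z with hGdef
  have hG : ContDiff ℝ (⊤ : ℕ∞) G := ((hF i).mul (hL j)).sub ((hF j).mul (hL i))
  -- Step 2: rewrite W
  have hW : ∀ (y : E4) (k : Fin 4), sphW u y k i j
      = pd k G y + 2 * (lap (f i) y * pd k (f j) y - lap (f j) y * pd k (f i) y) := by
    intro y k
    unfold sphW
    rw [lap_pi hu i y, lap_pi hu j y, pd_pi hu k j y, pd_pi hu k i y]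
    have : (fun z => sphDivV u z i j) = G := funext fun z => hDivV z
    rw [this]
  -- Step 3: expand the divergence of W, summand by summand
  have hsummand : ∀ k : Fin 4, pd k (fun y => sphW u y k i j) x
      = f i x * pd k (pd k (lap (f j))) x - f j x * pd k (pd k (lap (f i))) x
        + (lap (f i) x * pd k (pd k (f j)) x - lap (f j) x * pd k (pd k (f i)) x) := by
    intro k
    have h2 : (fun y => sphW u y k i j)
        = fun y => pd k G y
            + 2 * (lap (f i) y * pd k (f j) y - lap (f j) y * pd k (f i) y) :=
      funext fun y => hW y k
    have dG : DifferentiableAt ℝ (pd k G) x := dAt (pd_smooth hG k) x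
    have dRest : DifferentiableAt ℝ
        (fun y => 2 * (lap (f i) y * pd k (f j) y - lap (f j) y * pd k (f i) y)) x :=
      (((dAt (hL i) x).mul (dAt (pd_smooth (hF j) k) x)).sub
        ((dAt (hL j) x).mul (dAt (pd_smooth (hF i) k) x))).const_mul 2
    rw [h2, pd_add dG dRest k,
      pd_const_mul (((dAt (hL i) x).fun_mul (dAt (pd_smooth (hF j) k) x)).fun_sub
        ((dAt (hL j) x).fun_mul (dAt (pd_smooth (hF i) k) x))) 2 k,
      pd_sub ((dAt (hL i) x).fun_mul (dAt (pd_smooth (hF j) k) x))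
        ((dAt (hL j) x).fun_mul (dAt (pd_smooth (hF i) k) x)) k,
      pd_mul (dAt (hL i) x) (dAt (pd_smooth (hF j) k) x) k,
      pd_mul (dAt (hL j) x) (dAt (pd_smooth (hF i) k) x) k]
    have hGexp : pd k (pd k G) x
        = (pd k (pd k (f i)) x * lap (f j) x + 2 * (pd k (f i) x * pd k (lap (f j)) x)
            + f i x * pd k (pd k (lap (f j))) x)
          - (pd k (pd k (f j)) x * lap (f i) x + 2 * (pd k (f j) x * pd k (lap (f i)) x)
            + f j x * pd k (pd k (lap (f i))) x) := by
      have hGsplit : pd k G = fun y =>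
          pd k (fun z => f i z * lap (f j) z) y - pd k (fun z => f j z * lap (f i) z) y :=
        funext fun y => pd_sub ((dAt (hF i) y).fun_mul (dAt (hL j) y))
          ((dAt (hF j) y).fun_mul (dAt (hL i) y)) k
      rw [hGsplit, pd_sub (dAt (pd_smooth ((hF i).mul (hL j)) k) x)
          (dAt (pd_smooth ((hF j).mul (hL i)) k) x) k,
        pd2_mul (hF i) (hL j) k x, pd2_mul (hF j) (hL i) k x]
    rw [hGexp]
    ring
  calc ∑ k : Fin 4, pd k (fun y => sphW u y k i j) x
      = ∑ k : Fin 4, (f i x * pd k (pd k (lap (f j))) x - f j x * pd k (pd k (lap (f i))) x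
          + (lap (f i) x * pd k (pd k (f j)) x - lap (f j) x * pd k (pd k (f i)) x)) :=
        Finset.sum_congr rfl fun k _ => hsummand k
    _ = f i x * lap (lap (f j)) x - f j x * lap (lap (f i)) x
          + (lap (f i) x * lap (f j) x - lap (f j) x * lap (f i) x) := by
        rw [Finset.sum_add_distrib, Finset.sum_sub_distrib, Finset.sum_sub_distrib,
          ← Finset.mul_sum, ← Finset.mul_sum, ← Finset.mul_sum, ← Finset.mul_sum]
        rfl
    _ = u x i * bilap u x j - u x j * bilap u x i := by
        rw [bilap_pi hu i x, bilap_pi hu j x]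
        ring
    _ = 0 := by
        rw [hlam x]
        simp [Pi.smul_apply, smul_eq_mul]
        ring
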